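/- arXiv:2409.02521 — 7 statements merged into one kernel-verified Lean document; each statement's English description precedes it below -/
import Mathlib

section
/- Let x be an L² random vector in ℝⁿ with covariance Σ, let W and Φ be n×m real matrices, set f := Wᵀx and ε := x − Φf with Σ_ε := Cov(ε). If Σ W Φᵀ = Φ Wᵀ Σ W Φᵀ = Φ Wᵀ Σ, then Φ Wᵀ Σ_ε = 0. -/
open MeasureTheory Matrix

/-- Componentwise mean of a random vector. -/
noncomputable def vMean {Ω : Type*} [MeasurableSpace Ω] (μ : Measure Ω) {n : ℕ}
    (u : Ω → Fin n → ℝ) : Fin n → ℝ :=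
  fun i => ∫ ω, u ω i ∂μ

/-- Covariance matrix Cov(u,v) = E[(u - Eu)(v - Ev)ᵀ]. -/
noncomputable def vCov {Ω : Type*} [MeasurableSpace Ω] (μ : Measure Ω) {n m : ℕ}
    (u : Ω → Fin n → ℝ) (v : Ω → Fin m → ℝ) : Matrix (Fin n) (Fin m) ℝ :=
  Matrix.of fun i j => ∫ ω, (u ω i - vMean μ u i) * (v ω j - vMean μ v j) ∂μ

lemma int_mul' {Ω : Type*} [MeasurableSpace Ω] {μ : Measure Ω} {f g : Ω → ℝ}
    (hf : MemLp f 2 μ) (hg : MemLp g 2 μ) : Integrable (fun ω => f ω * g ω) μ := by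
  have h := L2.integrable_inner (𝕜 := ℝ) (hf.toLp f) (hg.toLp g)
  refine h.congr ?_
  filter_upwards [hf.coeFn_toLp, hg.coeFn_toLp] with ω h1 h2
  simp [h1, h2, RCLike.inner_apply, mul_comm]

lemma vMean_mulVec {Ω : Type*} [MeasurableSpace Ω] (μ : Measure Ω) [IsProbabilityMeasure μ]
    {n p : ℕ} (x : Ω → Fin n → ℝ) (hx : ∀ i, MemLp (fun ω => x ω i) 2 μ)
    (M : Matrix (Fin p) (Fin n) ℝ) :
    vMean μ (fun ω => M.mulVec (x ω)) = M.mulVec (vMean μ x) := by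
  funext i
  simp only [vMean, mulVec, dotProduct]
  rw [integral_finset_sum]
  · exact Finset.sum_congr rfl fun k _ => integral_const_mul _ _
  · exact fun k _ => ((hx k).integrable one_le_two).const_mul _

lemma vCov_mulVec {Ω : Type*} [MeasurableSpace Ω] (μ : Measure Ω) [IsProbabilityMeasure μ]
    {n p q : ℕ} (x : Ω → Fin n → ℝ) (hx : ∀ i, MemLp (fun ω => x ω i) 2 μ)
    (M : Matrix (Fin p) (Fin n) ℝ) (N : Matrix (Fin q) (Fin n) ℝ) :
    vCov μ (fun ω => M.mulVec (x ω)) (fun ω => N.mulVec (x ω)) = M * vCov μ x x * Nᵀ := by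
  have hc : ∀ k, MemLp (fun ω => x ω k - vMean μ x k) 2 μ :=
    fun k => (hx k).sub (memLp_const _)
  have hint : ∀ k l, Integrable
      (fun ω => (x ω k - vMean μ x k) * (x ω l - vMean μ x l)) μ :=
    fun k l => int_mul' (hc k) (hc l)
  ext i j
  simp only [vCov, vMean_mulVec μ x hx, Matrix.of_apply, Matrix.mul_apply,
    Matrix.transpose_apply]
  have hrw : ∀ ω, (M.mulVec (x ω) i - M.mulVec (vMean μ x) i) *
      (N.mulVec (x ω) j - N.mulVec (vMean μ x) j) =
      ∑ k, ∑ l, M i k * N j l * ((x ω k - vMean μ x k) * (x ω l - vMean μ x l)) := by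
    intro ω
    simp only [mulVec, dotProduct, ← Finset.sum_sub_distrib, ← mul_sub]
    rw [Finset.sum_mul_sum]
    exact Finset.sum_congr rfl fun k _ => Finset.sum_congr rfl fun l _ => by ring
  rw [integral_congr_ae (Filter.Eventually.of_forall hrw)]
  rw [integral_finset_sum _ (fun k _ => integrable_finset_sum _
    (fun l _ => ((hint k l).const_mul _)))]
  have step : ∀ k : Fin n, (∫ ω, ∑ l, M i k * N j l *
      ((x ω k - vMean μ x k) * (x ω l - vMean μ x l)) ∂μ) =
      ∑ l, M i k * N j l * ∫ ω, (x ω k - vMean μ x k) * (x ω l - vMean μ x l) ∂μ := by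
    intro k
    rw [integral_finset_sum _ (fun l _ => (hint k l).const_mul _)]
    exact Finset.sum_congr rfl fun l _ => integral_const_mul _ _
  refine (Finset.sum_congr rfl fun k _ => step k).trans ?_
  rw [Finset.sum_comm]
  refine Finset.sum_congr rfl fun l _ => ?_
  rw [Finset.sum_mul]
  refine Finset.sum_congr rfl fun k _ => ?_
  ring

theorem stmt4 {Ω : Type*} [MeasurableSpace Ω] (μ : Measure Ω) [IsProbabilityMeasure μ]
    {n m : ℕ} (x : Ω → Fin n → ℝ)
    (hx : ∀ i, MemLp (fun ω => x ω i) 2 μ)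
    (W Φ : Matrix (Fin n) (Fin m) ℝ)
    (Sx : Matrix (Fin n) (Fin n) ℝ) (hSx : Sx = vCov μ x x)
    (f : Ω → Fin m → ℝ) (hf : f = fun ω => Wᵀ.mulVec (x ω))
    (ε : Ω → Fin n → ℝ) (hε : ε = fun ω => x ω - Φ.mulVec (f ω))
    (h1 : Sx * W * Φᵀ = Φ * Wᵀ * Sx * W * Φᵀ)
    (h2 : Φ * Wᵀ * Sx * W * Φᵀ = Φ * Wᵀ * Sx) :
    Φ * Wᵀ * vCov μ ε ε = 0 := by
  set P : Matrix (Fin n) (Fin n) ℝ := Φ * Wᵀ with hP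
  have hεA : ε = fun ω => (1 - P).mulVec (x ω) := by
    funext ω
    rw [hε, hf]
    simp [sub_mulVec, one_mulVec, mulVec_mulVec, hP]
  have hcov : vCov μ ε ε = (1 - P) * vCov μ x x * (1 - P)ᵀ := by
    rw [hεA]; exact vCov_mulVec μ x hx _ _
  set Q : Matrix (Fin n) (Fin n) ℝ := W * Φᵀ with hQ
  have hPT : (1 - P)ᵀ = 1 - Q := by
    simp [hP, hQ, transpose_sub, transpose_mul]
  have hq : P * Sx * Q = P * Sx := by
    rw [hQ, ← Matrix.mul_assoc]; exact h2
  have h1' : Sx * Q = P * Sx * Q := by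
    rw [hQ, ← Matrix.mul_assoc, ← Matrix.mul_assoc]; exact h1
  have hp : P * Sx = Sx * Q := by
    calc P * Sx = P * Sx * Q := hq.symm
      _ = Sx * Q := h1'.symm
  rw [hcov, ← hSx, hPT]
  have expand : (1 - P) * Sx * (1 - Q) = Sx - P * Sx - (Sx * Q - P * Sx * Q) := by
    noncomm_ring
  rw [expand, hq, hp, sub_self, sub_zero, mul_sub, ← Matrix.mul_assoc, hq, hp, sub_self]
end

section
/- Let Φ be an n×m real matrix, R an m×m real matrix, S an n×n real matrix, and Wᵀ := R (SΦR)⁺ S. If Im(ΦR) ∩ ker(S) = {0}, then Im(ΦWᵀ) = Im(ΦR). -/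
/-!
Since `Im(ΦR) ∩ ker S = 0`, `S` can be cancelled on the left of matrices with columns in
`Im(ΦR)`. Applied to the first Penrose equation `SΦR · P · SΦR = SΦR` this gives
`ΦR · (PS) · ΦR = ΦR`, i.e. `PS` is a generalized inverse of `ΦR`; and then
`ΦWᵀ = ΦR · PS` has the same image as `ΦR`.
-/

open Matrix

/-- `B` is the Moore–Penrose pseudoinverse of `A` (the four Penrose conditions). -/
def IsMoorePenrose {k l : ℕ} (A : Matrix (Fin k) (Fin l) ℝ)
    (B : Matrix (Fin l) (Fin k) ℝ) : Prop :=
  A * B * A = A ∧ B * A * B = B ∧ (A * B)ᵀ = A * B ∧ (B * A)ᵀ = B * A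

open LinearMap

namespace Matrix

variable {K : Type*} [CommRing K] {l m n o : Type*} [Fintype m] [Fintype n] [Fintype o]
  [DecidableEq m] [DecidableEq n] [DecidableEq o]

theorem mul_left_cancel_of_range_inf_ker_eq_bot {A : Matrix m n K}
    {S : Matrix l m K} (h : range (toLin' A) ⊓ ker (toLin' S) = ⊥) {X Y : Matrix n o K}
    (hXY : S * A * X = S * A * Y) : A * X = A * Y := by
  refine ext_of_mulVec_single fun i => ?_
  set x : o → K := Pi.single i 1
  have hmem : (A * X) *ᵥ x - (A * Y) *ᵥ x ∈ range (toLin' A) ⊓ ker (toLin' S) := by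
    refine Submodule.mem_inf.mpr ⟨⟨X *ᵥ x - Y *ᵥ x, ?_⟩, ?_⟩
    · simp only [toLin'_apply, mulVec_sub, mulVec_mulVec]
    · simp only [mem_ker, toLin'_apply, mulVec_sub, mulVec_mulVec, ← Matrix.mul_assoc, hXY,
        sub_self]
  rw [h, Submodule.mem_bot, sub_eq_zero] at hmem
  exact hmem

theorem range_toLin'_mul_eq_of_mul_mul_eq {A : Matrix m n K} {G : Matrix n m K}
    (hG : A * G * A = A) : range (toLin' (A * G)) = range (toLin' A) := by
  refine le_antisymm ?_ ?_
  · rw [toLin'_mul]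
    exact range_comp_le_range _ _
  · conv_lhs => rw [← hG]
    rw [toLin'_mul (A * G) A]
    exact range_comp_le_range _ _

end Matrix

theorem stmt10 {n m : ℕ} (Φ : Matrix (Fin n) (Fin m) ℝ)
    (R : Matrix (Fin m) (Fin m) ℝ) (S : Matrix (Fin n) (Fin n) ℝ)
    (P : Matrix (Fin m) (Fin n) ℝ) (hP : IsMoorePenrose (S * Φ * R) P)
    (Wt : Matrix (Fin m) (Fin n) ℝ) (hW : Wt = R * P * S)
    (hint : LinearMap.range (Matrix.toLin' (Φ * R)) ⊓ LinearMap.ker (Matrix.toLin' S) = ⊥) :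
    LinearMap.range (Matrix.toLin' (Φ * Wt)) = LinearMap.range (Matrix.toLin' (Φ * R)) := by
  have hgen : Φ * R * (P * S) * (Φ * R) = Φ * R := by
    have hcancel := mul_left_cancel_of_range_inf_ker_eq_bot hint
      (X := P * S * (Φ * R)) (Y := 1) (by simpa only [Matrix.mul_assoc, Matrix.mul_one] using hP.1)
    simpa only [Matrix.mul_assoc, Matrix.mul_one] using hcancel
  rw [hW, show Φ * (R * P * S) = Φ * R * (P * S) by simp only [Matrix.mul_assoc]]
  exact range_toLin'_mul_eq_of_mul_mul_eq hgen
end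

section
/- Let Σ be an n×n real positive semidefinite matrix and μ ∈ ℝⁿ with μ ∈ Im(Σ). Let W be an n×m real matrix, μ_f := Wᵀμ, Σ_f := WᵀΣW. Then the maximal squared Sharpe ratios satisfy μ_fᵀ Σ_f⁺ μ_f = μᵀ Σ⁺ μ if and only if μ ∈ Im(ΣW). -/
open Matrix

private theorem tmul_self_zero {a b : ℕ} {A : Matrix (Fin a) (Fin b) ℝ} (h : Aᵀ * A = 0) :
    A = 0 := by
  rw [← conjTranspose_eq_transpose_of_trivial] at h
  exact Matrix.conjTranspose_mul_self_eq_zero.mp h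

private theorem dp_t {a b : ℕ} (A : Matrix (Fin a) (Fin b) ℝ) (v : Fin a → ℝ) (w : Fin b → ℝ) :
    (Aᵀ *ᵥ v) ⬝ᵥ w = v ⬝ᵥ (A *ᵥ w) := by
  rw [mulVec_transpose, ← dotProduct_mulVec]

private theorem mp_unique {k : ℕ} {A B C : Matrix (Fin k) (Fin k) ℝ}
    (b1 : A * B * A = A) (b2 : B * A * B = B) (b3 : (A * B)ᵀ = A * B) (b4 : (B * A)ᵀ = B * A)
    (c1 : A * C * A = A) (c2 : C * A * C = C) (c3 : (A * C)ᵀ = A * C) (c4 : (C * A)ᵀ = C * A) :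
    B = C := by
  have hAt : Aᵀ = Aᵀ * (A * C) := by
    nth_rewrite 1 [← c1]; rw [transpose_mul, c3]
  have hAt2 : Aᵀ = (C * A) * Aᵀ := by
    nth_rewrite 1 [← c1]; rw [Matrix.mul_assoc, transpose_mul, c4]
  have hAB : A * B = A * C := by
    calc A * B = (A * B)ᵀ := b3.symm
    _ = Bᵀ * Aᵀ := transpose_mul _ _
    _ = Bᵀ * (Aᵀ * (A * C)) := by rw [← hAt]
    _ = (Bᵀ * Aᵀ) * (A * C) := by rw [Matrix.mul_assoc]
    _ = (A * B)ᵀ * (A * C) := by rw [transpose_mul]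
    _ = (A * B * A) * C := by rw [b3]; noncomm_ring
    _ = A * C := by rw [b1]
  have hBA : B * A = C * A := by
    calc B * A = (B * A)ᵀ := b4.symm
    _ = Aᵀ * Bᵀ := transpose_mul _ _
    _ = (C * A) * (Aᵀ * Bᵀ) := by rw [← Matrix.mul_assoc, ← hAt2]
    _ = (C * A) * (B * A)ᵀ := by rw [transpose_mul]
    _ = C * (A * B * A) := by rw [b4]; noncomm_ring
    _ = C * A := by rw [b1]
  calc B = B * A * B := b2.symm
  _ = C * A * B := by rw [hBA]
  _ = C * (A * B) := by rw [Matrix.mul_assoc]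
  _ = C * (A * C) := by rw [hAB]
  _ = C := by rw [← Matrix.mul_assoc]; exact c2

theorem stmt13 {n m : ℕ} (Sx : Matrix (Fin n) (Fin n) ℝ) (hSx : Sx.PosSemidef)
    (μ : Fin n → ℝ) (hμ : μ ∈ LinearMap.range (Matrix.toLin' Sx))
    (W : Matrix (Fin n) (Fin m) ℝ)
    (μf : Fin m → ℝ) (hμf : μf = Wᵀ.mulVec μ)
    (Sf : Matrix (Fin m) (Fin m) ℝ) (hSf : Sf = Wᵀ * Sx * W)
    (Sxp : Matrix (Fin n) (Fin n) ℝ) (hSxp : IsMoorePenrose Sx Sxp)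
    (Sfp : Matrix (Fin m) (Fin m) ℝ) (hSfp : IsMoorePenrose Sf Sfp) :
    μf ⬝ᵥ Sfp.mulVec μf = μ ⬝ᵥ Sxp.mulVec μ ↔
      μ ∈ LinearMap.range (Matrix.toLin' (Sx * W)) := by
  obtain ⟨hf1, hf2, hf3, hf4⟩ := hSfp
  obtain ⟨hx1, hx2, hx3, hx4⟩ := hSxp
  obtain ⟨x, hx⟩ := hμ
  rw [Matrix.toLin'_apply] at hx
  have hSxsym : Sxᵀ = Sx := by
    rw [← conjTranspose_eq_transpose_of_trivial]; exact hSx.1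
  obtain ⟨S, hSsym, hSS⟩ : ∃ S : Matrix (Fin n) (Fin n) ℝ, Sᵀ = S ∧ S * S = Sx :=
    open scoped MatrixOrder in
    ⟨CFC.sqrt Sx, by
      open scoped MatrixOrder in
      rw [← conjTranspose_eq_transpose_of_trivial]; exact (CFC.sqrt_nonneg Sx).posSemidef.1,
      CFC.sqrt_mul_sqrt_self Sx hSx.nonneg⟩
  obtain ⟨B, hB⟩ : ∃ B, B = S * W := ⟨_, rfl⟩
  have hBtB : Bᵀ * B = Sf := by
    rw [hB, transpose_mul, hSsym, hSf, ← hSS]; simp only [Matrix.mul_assoc]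
  have hSfsym : Sfᵀ = Sf := by rw [← hBtB, transpose_mul, transpose_transpose]
  -- Sfp is symmetric, by uniqueness of the MP inverse
  have hswap : Sf * Sfpᵀ = Sfp * Sf := by rw [← hf4, transpose_mul, hSfsym]
  have hswap2 : Sfpᵀ * Sf = Sf * Sfp := by rw [← hf3, transpose_mul, hSfsym]
  have hGsym : Sfpᵀ = Sfp := by
    refine mp_unique ?_ ?_ ?_ ?_ hf1 hf2 hf3 hf4
    · have h := congrArg transpose hf1
      simp only [transpose_mul, hSfsym, Matrix.mul_assoc] at h ⊢
      exact h
    · have h := congrArg transpose hf2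
      simp only [transpose_mul, hSfsym, Matrix.mul_assoc] at h ⊢
      exact h
    · rw [hswap]; exact hf4
    · rw [hswap2]; exact hf3
  obtain ⟨u, hu⟩ : ∃ u, u = S *ᵥ x := ⟨_, rfl⟩
  obtain ⟨P, hP⟩ : ∃ P, P = B * Sfp * Bᵀ := ⟨_, rfl⟩
  have hPsym : Pᵀ = P := by
    rw [hP, transpose_mul, transpose_mul, transpose_transpose, hGsym, Matrix.mul_assoc]
  obtain ⟨C, hC⟩ : ∃ C, C = Sfp * Sf := ⟨_, rfl⟩
  have hSfC : Sf * C = Sf := by rw [hC, ← Matrix.mul_assoc]; exact hf1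
  have hBC : B * C = B := by
    have h1 : Bᵀ * (B * C) = Sf := by rw [← Matrix.mul_assoc, hBtB, hSfC]
    have hzero : (B * C - B)ᵀ * (B * C - B) = 0 := by
      rw [transpose_sub, Matrix.sub_mul, Matrix.mul_sub, Matrix.mul_sub, transpose_mul]
      have h2 : Cᵀ * Bᵀ * (B * C) = Cᵀ * Sf := by rw [Matrix.mul_assoc, h1]
      have h3 : Cᵀ * Bᵀ * B = Cᵀ * Sf := by rw [Matrix.mul_assoc, hBtB]
      rw [h2, h3, h1, hBtB]
      abel
    have := tmul_self_zero hzero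
    rwa [sub_eq_zero] at this
  have hPB : P * B = B := by
    rw [hP, Matrix.mul_assoc, hBtB, Matrix.mul_assoc, ← hC]; exact hBC
  have hPP : P * P = P := by
    rw [hP]
    simp only [Matrix.mul_assoc]
    rw [← Matrix.mul_assoc Bᵀ B, hBtB, ← Matrix.mul_assoc Sf Sfp Bᵀ,
      ← Matrix.mul_assoc Sfp (Sf * Sfp) Bᵀ, ← Matrix.mul_assoc Sfp Sf Sfp, hf2]
  have hμS : μ = S *ᵥ u := by rw [hu, mulVec_mulVec, hSS, hx]
  have hμfB : μf = Bᵀ *ᵥ u := by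
    rw [hμf, hμS, hB, transpose_mul, hSsym, ← mulVec_mulVec]
  have hLHS : μf ⬝ᵥ Sfp *ᵥ μf = u ⬝ᵥ P *ᵥ u := by
    rw [hμfB, dp_t, mulVec_mulVec, mulVec_mulVec, hP, Matrix.mul_assoc]
  have hRHS : μ ⬝ᵥ Sxp *ᵥ μ = u ⬝ᵥ u := by
    have step1 : μ ⬝ᵥ Sxp *ᵥ μ = x ⬝ᵥ Sx *ᵥ x := by
      rw [← hx]
      nth_rewrite 1 [← hSxsym]
      rw [dp_t, mulVec_mulVec, mulVec_mulVec, hx1]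
    have step2 : u ⬝ᵥ u = x ⬝ᵥ Sx *ᵥ x := by
      rw [hu]
      nth_rewrite 1 [← hSsym]
      rw [dp_t, mulVec_mulVec, hSS]
    rw [step1, step2]
  rw [hLHS, hRHS]
  have hkey : (u - P *ᵥ u) ⬝ᵥ (u - P *ᵥ u) = u ⬝ᵥ u - u ⬝ᵥ P *ᵥ u := by
    have hPuPu : (P *ᵥ u) ⬝ᵥ (P *ᵥ u) = u ⬝ᵥ P *ᵥ u := by
      nth_rewrite 1 [← hPsym]
      rw [dp_t, mulVec_mulVec, hPP]
    rw [sub_dotProduct, dotProduct_sub, dotProduct_sub, hPuPu,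
      dotProduct_comm (P *ᵥ u) u]
    ring
  constructor
  · intro h
    have h0 : (u - P *ᵥ u) ⬝ᵥ (u - P *ᵥ u) = 0 := by rw [hkey, h, sub_self]
    have hPu : P *ᵥ u = u := by
      have := dotProduct_self_eq_zero.mp h0
      rw [sub_eq_zero] at this; exact this.symm
    refine ⟨Sfp *ᵥ (Bᵀ *ᵥ u), ?_⟩
    rw [Matrix.toLin'_apply]
    have hBy : B *ᵥ (Sfp *ᵥ (Bᵀ *ᵥ u)) = u := by
      rw [mulVec_mulVec, mulVec_mulVec, ← hP]; exact hPu
    have hSxW : Sx * W = S * B := by rw [hB, ← Matrix.mul_assoc, hSS]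
    rw [hSxW, ← mulVec_mulVec, hBy]; exact hμS.symm
  · rintro ⟨y, hy⟩
    rw [Matrix.toLin'_apply] at hy
    have hSxW : Sx * W = S * B := by rw [hB, ← Matrix.mul_assoc, hSS]
    have hv : S *ᵥ (x - W *ᵥ y) = u - B *ᵥ y := by
      rw [mulVec_sub, ← hu, hB, mulVec_mulVec]
    have hSv : S *ᵥ (u - B *ᵥ y) = 0 := by
      rw [mulVec_sub, ← hμS, mulVec_mulVec, ← hSxW, ← mulVec_mulVec, mulVec_mulVec, hy, sub_self]
    have h0 : (u - B *ᵥ y) ⬝ᵥ (u - B *ᵥ y) = 0 := by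
      nth_rewrite 1 [← hv]
      nth_rewrite 1 [← hSsym]
      rw [dp_t, hSv, dotProduct_zero]
    have huB : u = B *ᵥ y := by
      have := dotProduct_self_eq_zero.mp h0
      rw [sub_eq_zero] at this; exact this
    have hPu : P *ᵥ u = u := by rw [huB, mulVec_mulVec, hPB]
    rw [← hPu, mulVec_mulVec, hPP]
end

section
/- Let Σ be an n×n real positive semidefinite matrix, μ ∈ ℝⁿ with μ ∈ Im(Σ), and W an n×m real matrix with μ ∈ Im(ΣW). Write μ_f := Wᵀμ and Σ_f := WᵀΣW. Then for any b ∈ Im(WᵀΣ^{1/2}) with μ = ΣW b, one has Σ_f⁺ μ_f = b, and consequently μ_fᵀ Σ_f⁺ Wᵀ v = μᵀ Σ⁺ v for every v ∈ Im(Σ). -/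
open Matrix

private lemma dp_swap {k l : ℕ} (A : Matrix (Fin k) (Fin l) ℝ) (x : Fin l → ℝ)
    (y : Fin k → ℝ) : x ⬝ᵥ Aᵀ *ᵥ y = (A *ᵥ x) ⬝ᵥ y := by
  rw [dotProduct_mulVec, vecMul_transpose]

private lemma symm_of_hermitian {k : ℕ} {A : Matrix (Fin k) (Fin k) ℝ}
    (h : A.IsHermitian) : Aᵀ = A := by
  have := h.eq
  rwa [← Matrix.conjTranspose_eq_transpose_of_trivial]

/-- Key lemma: if `P` is a Penrose inverse of the Gram matrix `Aᵀ * A` and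
`b` is in the range of `Aᵀ`, then `P *ᵥ ((Aᵀ * A) *ᵥ b) = b`. -/
private lemma key {k l : ℕ} (A : Matrix (Fin k) (Fin l) ℝ)
    (P : Matrix (Fin l) (Fin l) ℝ) (hP : IsMoorePenrose (Aᵀ * A) P)
    (c : Fin k → ℝ) (b : Fin l → ℝ) (hb : b = Aᵀ *ᵥ c) :
    P *ᵥ ((Aᵀ * A) *ᵥ b) = b := by
  obtain ⟨x, hx⟩ : ∃ x, x = b - P *ᵥ (Aᵀ *ᵥ (A *ᵥ b)) := ⟨_, rfl⟩
  have hP1 := congrArg (· *ᵥ b) hP.1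
  simp only [← mulVec_mulVec] at hP1
  -- hP1 : Aᵀ *ᵥ (A *ᵥ (P *ᵥ (Aᵀ *ᵥ (A *ᵥ b)))) = Aᵀ *ᵥ (A *ᵥ b)
  have hGd : Aᵀ *ᵥ (A *ᵥ x) = 0 := by
    rw [hx]
    simp only [Matrix.mulVec_sub]
    rw [hP1, sub_self]
  have hAd : A *ᵥ x = 0 := by
    rw [← dotProduct_self_eq_zero, ← dp_swap, hGd, dotProduct_zero]
  have h4 := congrArg (· *ᵥ b) hP.2.2.2
  simp only [Matrix.transpose_mul, transpose_transpose, ← mulVec_mulVec] at h4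
  -- h4 : Aᵀ *ᵥ (A *ᵥ (Pᵀ *ᵥ b)) = P *ᵥ (Aᵀ *ᵥ (A *ᵥ b))
  have hxe : x = Aᵀ *ᵥ (c - A *ᵥ (Pᵀ *ᵥ b)) := by
    rw [hx, Matrix.mulVec_sub, h4, ← hb]
  have hx0 : x = 0 := by
    rw [← dotProduct_self_eq_zero]
    calc x ⬝ᵥ x = x ⬝ᵥ Aᵀ *ᵥ (c - A *ᵥ (Pᵀ *ᵥ b)) := by rw [← hxe]
      _ = (A *ᵥ x) ⬝ᵥ (c - A *ᵥ (Pᵀ *ᵥ b)) := dp_swap A x _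
      _ = 0 := by rw [hAd, zero_dotProduct]
  have h5 : b - P *ᵥ (Aᵀ *ᵥ (A *ᵥ b)) = 0 := by rw [← hx]; exact hx0
  simp only [← mulVec_mulVec]
  exact (sub_eq_zero.mp h5).symm

theorem stmt14 {n m : ℕ} (Sx : Matrix (Fin n) (Fin n) ℝ) (hSx : Sx.PosSemidef)
    (μ : Fin n → ℝ) (hμ : μ ∈ LinearMap.range (Matrix.toLin' Sx))
    (W : Matrix (Fin n) (Fin m) ℝ)
    (hspan : μ ∈ LinearMap.range (Matrix.toLin' (Sx * W)))
    (μf : Fin m → ℝ) (hμf : μf = Wᵀ.mulVec μ)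
    (Sf : Matrix (Fin m) (Fin m) ℝ) (hSf : Sf = Wᵀ * Sx * W)
    (Sxp : Matrix (Fin n) (Fin n) ℝ) (hSxp : IsMoorePenrose Sx Sxp)
    (Sfp : Matrix (Fin m) (Fin m) ℝ) (hSfp : IsMoorePenrose Sf Sfp)
    (b : Fin m → ℝ)
    (hb : b ∈ LinearMap.range (Matrix.toLin' (Wᵀ * (hSx.1.eigenvectorUnitary.1 * diagonal ((↑) ∘ (√·) ∘ hSx.1.eigenvalues) *
      (star hSx.1.eigenvectorUnitary : Matrix (Fin n) (Fin n) ℝ)))))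
    (hμb : μ = (Sx * W).mulVec b) :
    Sfp.mulVec μf = b ∧
      ∀ v ∈ LinearMap.range (Matrix.toLin' Sx),
        μf ⬝ᵥ Sfp.mulVec (Wᵀ.mulVec v) = μ ⬝ᵥ Sxp.mulVec v := by
  set S : Matrix (Fin n) (Fin n) ℝ := hSx.1.eigenvectorUnitary.1 * diagonal ((↑) ∘ (√·) ∘ hSx.1.eigenvalues) *
      (star hSx.1.eigenvectorUnitary : Matrix (Fin n) (Fin n) ℝ) with hSdef
  have hSH : S.IsHermitian := by
    rw [hSdef, star_eq_conjTranspose]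
    exact isHermitian_mul_mul_conjTranspose _ (isHermitian_diagonal_of_self_adjoint _ (by
      ext i; simp))
  have hSsym : Sᵀ = S := symm_of_hermitian hSH
  have hSS : S * S = Sx := by
    have hU := Unitary.coe_star_mul_self hSx.1.eigenvectorUnitary
    have hD : diagonal ((↑) ∘ (√·) ∘ hSx.1.eigenvalues) * diagonal ((↑) ∘ (√·) ∘ hSx.1.eigenvalues)
        = diagonal (RCLike.ofReal ∘ hSx.1.eigenvalues : Fin n → ℝ) := by
      rw [diagonal_mul_diagonal]; congr 1; ext i
      simp [Real.mul_self_sqrt (hSx.eigenvalues_nonneg i)]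
    conv_rhs => rw [hSx.1.spectral_theorem, Unitary.conjStarAlgAut_apply]
    rw [hSdef]
    calc _ = (hSx.1.eigenvectorUnitary.1 * diagonal ((↑) ∘ (√·) ∘ hSx.1.eigenvalues)) *
        ((star hSx.1.eigenvectorUnitary : Matrix (Fin n) (Fin n) ℝ) * hSx.1.eigenvectorUnitary.1) *
        (diagonal ((↑) ∘ (√·) ∘ hSx.1.eigenvalues) * (star hSx.1.eigenvectorUnitary : Matrix (Fin n) (Fin n) ℝ)) := by
          simp only [Matrix.mul_assoc]
      _ = _ := by rw [hU, Matrix.mul_one, Matrix.mul_assoc, ← Matrix.mul_assoc _ _ (star _ : Matrix _ _ ℝ), hD, ← Matrix.mul_assoc]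
  have hSxSym : Sxᵀ = Sx := symm_of_hermitian hSx.1
  have hAT : (S * W)ᵀ = Wᵀ * S := by
    rw [Matrix.transpose_mul, hSsym]
  have hGf : (S * W)ᵀ * (S * W) = Sf := by
    have hassoc : Wᵀ * S * (S * W) = Wᵀ * (S * S) * W := by
      simp only [Matrix.mul_assoc]
    rw [hAT, hassoc, hSS, hSf]
  obtain ⟨c, hc⟩ := hb
  rw [Matrix.toLin'_apply] at hc
  have hbc : b = (S * W)ᵀ *ᵥ c := by rw [hAT]; exact hc.symm
  have hSfsym : Sfᵀ = Sf := by
    rw [← hGf, Matrix.transpose_mul, transpose_transpose]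
  have hμfb : μf = Sf *ᵥ b := by
    rw [hμf, hμb, mulVec_mulVec, ← Matrix.mul_assoc, ← hSf]
  have hSfp' : IsMoorePenrose ((S * W)ᵀ * (S * W)) Sfp := by
    rw [hGf]; exact hSfp
  have goal1 : Sfp *ᵥ μf = b := by
    rw [hμfb, ← hGf]
    exact key _ Sfp hSfp' c b hbc
  refine ⟨goal1, ?_⟩
  -- Sfpᵀ is also a Penrose inverse of Sf
  obtain ⟨h1, h2, h3, h4⟩ := hSfp
  have e1 : Sf * Sfpᵀ = Sfp * Sf := by
    have h : (Sfp * Sf)ᵀ = Sfᵀ * Sfpᵀ := Matrix.transpose_mul _ _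
    rw [hSfsym] at h; rw [← h, h4]
  have e2 : Sfpᵀ * Sf = Sf * Sfp := by
    have h : (Sf * Sfp)ᵀ = Sfpᵀ * Sfᵀ := Matrix.transpose_mul _ _
    rw [hSfsym] at h; rw [← h, h3]
  have hQ : IsMoorePenrose Sf Sfpᵀ := by
    refine ⟨?_, ?_, ?_, ?_⟩
    · have h := congrArg Matrix.transpose h1
      simp only [Matrix.transpose_mul, hSfsym] at h
      rwa [← Matrix.mul_assoc] at h
    · have h := congrArg Matrix.transpose h2
      simp only [Matrix.transpose_mul, hSfsym] at h
      rwa [← Matrix.mul_assoc] at h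
    · rw [e1, h4]
    · rw [e2, h3]
  have hQ' : IsMoorePenrose ((S * W)ᵀ * (S * W)) Sfpᵀ := by
    rw [hGf]; exact hQ
  have hQb : Sfpᵀ *ᵥ μf = b := by
    rw [hμfb, ← hGf]
    exact key _ Sfpᵀ hQ' c b hbc
  intro v hv
  obtain ⟨u, hu⟩ := hv
  rw [Matrix.toLin'_apply] at hu
  subst hu
  have lhs : μf ⬝ᵥ Sfp *ᵥ (Wᵀ *ᵥ (Sx *ᵥ u)) = b ⬝ᵥ (Wᵀ *ᵥ (Sx *ᵥ u)) := by
    have h := dp_swap Sfpᵀ μf (Wᵀ *ᵥ (Sx *ᵥ u))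
    rw [transpose_transpose] at h
    rw [h, hQb]
  rw [show Wᵀ.mulVec (Sx *ᵥ u) = Wᵀ *ᵥ (Sx *ᵥ u) from rfl] at *
  rw [lhs]
  have hx1 := congrArg (· *ᵥ u) hSxp.1
  simp only [← mulVec_mulVec] at hx1
  -- hx1 : Sx *ᵥ (Sxp *ᵥ (Sx *ᵥ u)) = Sx *ᵥ u
  calc b ⬝ᵥ Wᵀ *ᵥ (Sx *ᵥ u)
      = b ⬝ᵥ Wᵀ *ᵥ (Sx *ᵥ (Sxp *ᵥ (Sx *ᵥ u))) := by rw [hx1]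
    _ = b ⬝ᵥ (Sx * W)ᵀ *ᵥ (Sxp *ᵥ (Sx *ᵥ u)) := by
        rw [Matrix.transpose_mul, hSxSym, ← mulVec_mulVec]
    _ = ((Sx * W) *ᵥ b) ⬝ᵥ (Sxp *ᵥ (Sx *ᵥ u)) := dp_swap (Sx * W) b _
    _ = μ ⬝ᵥ Sxp *ᵥ (Sx *ᵥ u) := by rw [hμb]
end

section
/- Let Σ be an n×n real positive semidefinite matrix, μ ∈ Im(Σ), and W, Φ n×m real matrices satisfying Σ W Φᵀ = Φ Wᵀ Σ W Φᵀ = Φ Wᵀ Σ. If μ = Φ Wᵀ μ, then μ ∈ Im(ΣW). Conversely, if additionally Wᵀ Φ Wᵀ = Wᵀ, then μ ∈ Im(ΣW) implies μ = Φ Wᵀ μ. -/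
open Matrix

/-
Write `P = Φ Wᵀ`. The hypotheses give the intertwining relation `Σ W Φᵀ = P Σ`. If `μ = Σ z` is fixed by
`P`, then `μ = P Σ z = Σ W (Φᵀ z)` lies in the range of `Σ W`. Conversely, `Wᵀ Φ Wᵀ = Wᵀ` transposes to
`W Φᵀ W = W`, so `P Σ W = Σ W Φᵀ W = Σ W`: `P` fixes the range of `Σ W` pointwise.
-/

namespace Matrix

variable {R : Type*} [CommRing R] {l k : Type*} [Fintype l] [Fintype k] [DecidableEq k]

theorem mem_range_toLin'_mul_of_mul_mul_eq [DecidableEq l] {A P : Matrix l l R} {B : Matrix l k R}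
    {C : Matrix k l R} (h : A * B * C = P * A) {x : l → R}
    (hx : x ∈ LinearMap.range (toLin' A)) (hfix : x = P *ᵥ x) :
    x ∈ LinearMap.range (toLin' (A * B)) := by
  obtain ⟨z, rfl⟩ := hx
  refine ⟨C *ᵥ z, ?_⟩
  rw [hfix]
  simp only [toLin'_apply, mulVec_mulVec, h]

theorem mulVec_eq_of_mem_range_toLin' {P : Matrix l l R} {M : Matrix l k R} (h : P * M = M)
    {x : l → R} (hx : x ∈ LinearMap.range (toLin' M)) : x = P *ᵥ x := by
  obtain ⟨y, rfl⟩ := hx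
  simp only [toLin'_apply, mulVec_mulVec, h]

end Matrix

theorem stmt15_general {n m : ℕ} (Sx : Matrix (Fin n) (Fin n) ℝ)
    (μ : Fin n → ℝ) (hμ : μ ∈ LinearMap.range (Matrix.toLin' Sx))
    (W Φ : Matrix (Fin n) (Fin m) ℝ)
    (h1 : Sx * W * Φᵀ = Φ * Wᵀ * Sx * W * Φᵀ)
    (h2 : Φ * Wᵀ * Sx * W * Φᵀ = Φ * Wᵀ * Sx) :
    (μ = (Φ * Wᵀ).mulVec μ → μ ∈ LinearMap.range (Matrix.toLin' (Sx * W))) ∧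
      (Wᵀ * Φ * Wᵀ = Wᵀ →
        μ ∈ LinearMap.range (Matrix.toLin' (Sx * W)) → μ = (Φ * Wᵀ).mulVec μ) := by
  have intertwine : Sx * W * Φᵀ = Φ * Wᵀ * Sx := h1.trans h2
  refine ⟨mem_range_toLin'_mul_of_mul_mul_eq intertwine hμ, fun hinv => ?_⟩
  have hW : W * Φᵀ * W = W := by
    simpa only [transpose_mul, transpose_transpose, Matrix.mul_assoc] using congrArg transpose hinv
  refine mulVec_eq_of_mem_range_toLin' ?_
  calc Φ * Wᵀ * (Sx * W) = Sx * (W * Φᵀ * W) := by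
        rw [← Matrix.mul_assoc, ← intertwine]; simp only [Matrix.mul_assoc]
    _ = Sx * W := by rw [hW]

theorem stmt15 {n m : ℕ} (Sx : Matrix (Fin n) (Fin n) ℝ) (hSx : Sx.PosSemidef)
    (μ : Fin n → ℝ) (hμ : μ ∈ LinearMap.range (Matrix.toLin' Sx))
    (W Φ : Matrix (Fin n) (Fin m) ℝ)
    (h1 : Sx * W * Φᵀ = Φ * Wᵀ * Sx * W * Φᵀ)
    (h2 : Φ * Wᵀ * Sx * W * Φᵀ = Φ * Wᵀ * Sx) :
    (μ = (Φ * Wᵀ).mulVec μ → μ ∈ LinearMap.range (Matrix.toLin' (Sx * W))) ∧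
      (Wᵀ * Φ * Wᵀ = Wᵀ →
        μ ∈ LinearMap.range (Matrix.toLin' (Sx * W)) → μ = (Φ * Wᵀ).mulVec μ) :=
  stmt15_general Sx μ hμ W Φ h1 h2
end

section
/- Let Φ be an n×m real matrix and S an invertible n×n real matrix. Then P := Φ (SΦ)⁺ S satisfies P² = P and Im(P) = Im(Φ), i.e., P is a (generally non-orthogonal) projection onto the column space of Φ. -/
open Matrix

/-! If `A * B * A = A`, then `A * B` is idempotent and has the same range as `A`. Cancelling the
invertible `S` on the left turns the first Penrose condition `(S * Φ) * Pinv * (S * Φ) = S * Φ` into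
`Φ * (Pinv * S) * Φ = Φ`, so `P = Φ * (Pinv * S)` is such an idempotent with range `Im Φ`. -/

namespace Matrix

variable {R : Type*} {k l : Type*} [Fintype k] [Fintype l]

theorem isIdempotentElem_mul_of_mul_mul_eq_self [Semiring R] {A : Matrix k l R}
    {B : Matrix l k R} (h : A * B * A = A) : IsIdempotentElem (A * B) := by
  rw [IsIdempotentElem, ← Matrix.mul_assoc, h]

theorem range_toLin'_mul_of_mul_mul_eq_self [CommSemiring R] [DecidableEq k] [DecidableEq l]
    {A : Matrix k l R} {B : Matrix l k R} (h : A * B * A = A) :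
    LinearMap.range (toLin' (A * B)) = LinearMap.range (toLin' A) := by
  refine le_antisymm ?_ ?_
  · rw [toLin'_mul]
    exact LinearMap.range_comp_le_range _ _
  · conv_lhs => rw [← h, toLin'_mul]
    exact LinearMap.range_comp_le_range _ _

theorem mul_mul_mul_eq_self_of_isUnit [CommRing R] [DecidableEq k] {S : Matrix k k R}
    (hS : IsUnit S) {A : Matrix k l R} {X : Matrix l k R} (h : S * A * X * (S * A) = S * A) :
    A * (X * S) * A = A := by
  have := hS.invertible
  apply mul_right_injective_of_invertible S
  simpa only [Matrix.mul_assoc] using h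

end Matrix

theorem stmt18 {n m : ℕ} (Φ : Matrix (Fin n) (Fin m) ℝ)
    (S : Matrix (Fin n) (Fin n) ℝ) (hS : IsUnit S)
    (Pinv : Matrix (Fin m) (Fin n) ℝ) (hPinv : IsMoorePenrose (S * Φ) Pinv)
    (P : Matrix (Fin n) (Fin n) ℝ) (hP : P = Φ * Pinv * S) :
    P * P = P ∧
      LinearMap.range (Matrix.toLin' P) = LinearMap.range (Matrix.toLin' Φ) := by
  have hΦ : Φ * (Pinv * S) * Φ = Φ := mul_mul_mul_eq_self_of_isUnit hS hPinv.1
  rw [hP, Matrix.mul_assoc Φ]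
  exact ⟨isIdempotentElem_mul_of_mul_mul_eq_self hΦ, range_toLin'_mul_of_mul_mul_eq_self hΦ⟩
end

section
/- Let g be an L² random vector in ℝᵐ with mean μ_g and invertible covariance Σ_g, let η be an L² random vector in ℝⁿ with E[η] = 0, Cov(g,η) = 0, and isotropic covariance Cov(η) = σ² Iₙ with σ ≠ 0. Let Φ be an n×m real matrix with rank m, x := Φg + η, f := Φ⁺x, and ε := x − Φf. Then E[f] = μ_g, Cov(f) = Σ_g + σ² (ΦᵀΦ)⁻¹, Cov(ε) = σ² (Iₙ − Φ(ΦᵀΦ)⁻¹Φᵀ), E[ε] = 0, and Cov(f, ε) = 0. -/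
open MeasureTheory Matrix

open scoped ENNReal

set_option linter.unusedSectionVars false
section aux
variable {Ω : Type*} [MeasurableSpace Ω] (μ : Measure Ω) [IsProbabilityMeasure μ]

lemma memLp_mulVec {p q : ℕ} (A : Matrix (Fin p) (Fin q) ℝ) {u : Ω → Fin q → ℝ}
    (hu : ∀ j, MemLp (fun ω => u ω j) 2 μ) (i : Fin p) :
    MemLp (fun ω => A.mulVec (u ω) i) 2 μ := by
  have h : MemLp (∑ j : Fin q, fun ω => A i j * u ω j) 2 μ :=
    memLp_finset_sum' _ (fun j _ => (hu j).const_mul _)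
  have : (fun ω => A.mulVec (u ω) i) = ∑ j : Fin q, fun ω => A i j * u ω j := by
    funext ω; simp [Matrix.mulVec, dotProduct]
  rw [this]; exact h

lemma memLp_centered {q : ℕ} {u : Ω → Fin q → ℝ}
    (hu : ∀ j, MemLp (fun ω => u ω j) 2 μ) (j : Fin q) :
    MemLp (fun ω => u ω j - vMean μ u j) 2 μ :=
  (hu j).sub (memLp_const _)

lemma integrable_centered_mul {q r : ℕ} {u : Ω → Fin q → ℝ} {v : Ω → Fin r → ℝ}
    (hu : ∀ j, MemLp (fun ω => u ω j) 2 μ) (hv : ∀ j, MemLp (fun ω => v ω j) 2 μ)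
    (i : Fin q) (j : Fin r) :
    Integrable (fun ω => (u ω i - vMean μ u i) * (v ω j - vMean μ v j)) μ := by
  have h1 := memLp_centered μ hu i
  have h2 := memLp_centered μ hv j
  have h3 : MemLp (fun ω => (u ω i - vMean μ u i) * (v ω j - vMean μ v j)) 1 μ := by
    have h12 : (1 : ℝ≥0∞) / 1 = 1 / 2 + 1 / 2 := by
      rw [ENNReal.div_add_div_same, one_add_one_eq_two, div_one]
      exact (ENNReal.div_self (by norm_num) (by norm_num)).symm
    have := MemLp.smul (φ := fun ω => u ω i - vMean μ u i) (r := 1) h2 h1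
      (hpqr := ⟨by simpa [one_div] using h12.symm⟩)
    exact this
  exact memLp_one_iff_integrable.mp h3

lemma vMean_mulVec_s19 {p q : ℕ} (A : Matrix (Fin p) (Fin q) ℝ) {u : Ω → Fin q → ℝ}
    (hu : ∀ j, MemLp (fun ω => u ω j) 2 μ) :
    vMean μ (fun ω => A.mulVec (u ω)) = A.mulVec (vMean μ u) := by
  funext i
  have hint : ∀ j, Integrable (fun ω => A i j * u ω j) μ :=
    fun j => (((hu j).integrable one_le_two)).const_mul _
  simp only [vMean, Matrix.mulVec, dotProduct]
  rw [show (fun ω => ∑ j, A i j * u ω j) = fun ω => ∑ j, A i j * u ω j from rfl,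
    integral_finset_sum _ (fun j _ => hint j)]
  simp [integral_const_mul, vMean]

lemma vMean_add {q : ℕ} {u v : Ω → Fin q → ℝ}
    (hu : ∀ j, MemLp (fun ω => u ω j) 2 μ) (hv : ∀ j, MemLp (fun ω => v ω j) 2 μ) :
    vMean μ (fun ω => u ω + v ω) = vMean μ u + vMean μ v := by
  funext i
  simp only [vMean, Pi.add_apply]
  exact integral_add ((hu i).integrable one_le_two) ((hv i).integrable one_le_two)

lemma vCov_mulVec_left {p q r : ℕ} (A : Matrix (Fin p) (Fin q) ℝ) {u : Ω → Fin q → ℝ}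
    {v : Ω → Fin r → ℝ}
    (hu : ∀ j, MemLp (fun ω => u ω j) 2 μ) (hv : ∀ j, MemLp (fun ω => v ω j) 2 μ) :
    vCov μ (fun ω => A.mulVec (u ω)) v = A * vCov μ u v := by
  ext i j
  simp only [vCov, Matrix.of_apply, Matrix.mul_apply]
  rw [vMean_mulVec_s19 μ A hu]
  have heq : (fun ω => (A.mulVec (u ω) i - A.mulVec (vMean μ u) i) * (v ω j - vMean μ v j))
      = fun ω => ∑ k, A i k * ((u ω k - vMean μ u k) * (v ω j - vMean μ v j)) := by
    funext ω
    simp only [Matrix.mulVec, dotProduct, ← Finset.sum_sub_distrib, Finset.sum_mul]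
    congr 1; funext k; ring
  rw [heq, integral_finset_sum _ (fun k _ =>
    ((integrable_centered_mul μ hu hv k j).const_mul _))]
  simp [integral_const_mul, vCov]

lemma vCov_mulVec_right {p q r : ℕ} (C : Matrix (Fin p) (Fin r) ℝ) {u : Ω → Fin q → ℝ}
    {v : Ω → Fin r → ℝ}
    (hu : ∀ j, MemLp (fun ω => u ω j) 2 μ) (hv : ∀ j, MemLp (fun ω => v ω j) 2 μ) :
    vCov μ u (fun ω => C.mulVec (v ω)) = vCov μ u v * Cᵀ := by
  ext i j
  simp only [vCov, Matrix.of_apply, Matrix.mul_apply, Matrix.transpose_apply]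
  rw [vMean_mulVec_s19 μ C hv]
  have heq : (fun ω => (u ω i - vMean μ u i) * (C.mulVec (v ω) j - C.mulVec (vMean μ v) j))
      = fun ω => ∑ k, ((u ω i - vMean μ u i) * (v ω k - vMean μ v k)) * C j k := by
    funext ω
    simp only [Matrix.mulVec, dotProduct, ← Finset.sum_sub_distrib, Finset.mul_sum]
    congr 1; funext k; ring
  rw [heq, integral_finset_sum _ (fun k _ =>
    ((integrable_centered_mul μ hu hv i k).mul_const _))]
  simp [integral_mul_const, vCov]

lemma vCov_add_left {q r : ℕ} {u₁ u₂ : Ω → Fin q → ℝ} {v : Ω → Fin r → ℝ}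
    (h1 : ∀ j, MemLp (fun ω => u₁ ω j) 2 μ) (h2 : ∀ j, MemLp (fun ω => u₂ ω j) 2 μ)
    (hv : ∀ j, MemLp (fun ω => v ω j) 2 μ) :
    vCov μ (fun ω => u₁ ω + u₂ ω) v = vCov μ u₁ v + vCov μ u₂ v := by
  ext i j
  simp only [vCov, Matrix.of_apply, Matrix.add_apply]
  rw [vMean_add μ h1 h2]
  have heq : (fun ω => ((u₁ ω + u₂ ω) i - (vMean μ u₁ + vMean μ u₂) i) * (v ω j - vMean μ v j))
      = fun ω => (u₁ ω i - vMean μ u₁ i) * (v ω j - vMean μ v j)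
          + (u₂ ω i - vMean μ u₂ i) * (v ω j - vMean μ v j) := by
    funext ω; simp only [Pi.add_apply]; ring
  rw [heq, integral_add (integrable_centered_mul μ h1 hv i j) (integrable_centered_mul μ h2 hv i j)]

lemma vCov_add_right {q r : ℕ} {u : Ω → Fin q → ℝ} {v₁ v₂ : Ω → Fin r → ℝ}
    (hu : ∀ j, MemLp (fun ω => u ω j) 2 μ)
    (h1 : ∀ j, MemLp (fun ω => v₁ ω j) 2 μ) (h2 : ∀ j, MemLp (fun ω => v₂ ω j) 2 μ) :
    vCov μ u (fun ω => v₁ ω + v₂ ω) = vCov μ u v₁ + vCov μ u v₂ := by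
  ext i j
  simp only [vCov, Matrix.of_apply, Matrix.add_apply]
  rw [vMean_add μ h1 h2]
  have heq : (fun ω => (u ω i - vMean μ u i) * ((v₁ ω + v₂ ω) j - (vMean μ v₁ + vMean μ v₂) j))
      = fun ω => (u ω i - vMean μ u i) * (v₁ ω j - vMean μ v₁ j)
          + (u ω i - vMean μ u i) * (v₂ ω j - vMean μ v₂ j) := by
    funext ω; simp only [Pi.add_apply]; ring
  rw [heq, integral_add (integrable_centered_mul μ hu h1 i j) (integrable_centered_mul μ hu h2 i j)]

lemma vCov_transpose {q r : ℕ} {u : Ω → Fin q → ℝ} {v : Ω → Fin r → ℝ} :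
    vCov μ v u = (vCov μ u v)ᵀ := by
  ext i j
  simp only [vCov, Matrix.of_apply, Matrix.transpose_apply]
  congr 1; funext ω; ring

end aux

theorem stmt19 {Ω : Type*} [MeasurableSpace Ω] (μ : Measure Ω) [IsProbabilityMeasure μ]
    {n m : ℕ} (g : Ω → Fin m → ℝ) (η : Ω → Fin n → ℝ)
    (hg : ∀ j, MemLp (fun ω => g ω j) 2 μ)
    (hη : ∀ i, MemLp (fun ω => η ω i) 2 μ)
    (μg : Fin m → ℝ) (hμg : μg = vMean μ g)
    (Sg : Matrix (Fin m) (Fin m) ℝ) (hSg : Sg = vCov μ g g) (hSgInv : IsUnit Sg)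
    (hηmean : vMean μ η = 0)
    (huncorr : vCov μ g η = 0)
    (σ : ℝ) (hσ : σ ≠ 0)
    (hηiso : vCov μ η η = σ ^ 2 • (1 : Matrix (Fin n) (Fin n) ℝ))
    (Φ : Matrix (Fin n) (Fin m) ℝ) (hrank : Φ.rank = m)
    (Φp : Matrix (Fin m) (Fin n) ℝ) (hΦp : IsMoorePenrose Φ Φp)
    (x : Ω → Fin n → ℝ) (hx : x = fun ω => Φ.mulVec (g ω) + η ω)
    (f : Ω → Fin m → ℝ) (hf : f = fun ω => Φp.mulVec (x ω))
    (ε : Ω → Fin n → ℝ) (hε : ε = fun ω => x ω - Φ.mulVec (f ω)) :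
    vMean μ f = μg ∧
    vCov μ f f = Sg + σ ^ 2 • (Φᵀ * Φ)⁻¹ ∧
    vCov μ ε ε = σ ^ 2 • ((1 : Matrix (Fin n) (Fin n) ℝ) - Φ * (Φᵀ * Φ)⁻¹ * Φᵀ) ∧
    vMean μ ε = 0 ∧
    vCov μ f ε = 0 := by
  obtain ⟨h1, h2, h3, h4⟩ := hΦp
  -- Φᵀ * Φ is invertible
  have hUnit : IsUnit (Φᵀ * Φ) := by
    have hker : LinearMap.ker Φ.mulVecLin = ⊥ := by
      have ha := LinearMap.finrank_range_add_finrank_ker Φ.mulVecLin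
      rw [show Module.finrank ℝ (Fin m → ℝ) = m by simp] at ha
      have hb : Φ.rank = Module.finrank ℝ (LinearMap.range Φ.mulVecLin) := rfl
      rw [← hb, hrank] at ha
      exact Submodule.finrank_eq_zero.mp (by omega)
    rw [Matrix.isUnit_iff_isUnit_det, isUnit_iff_ne_zero]
    intro hdet
    obtain ⟨v, hv, hv0⟩ := (Matrix.exists_mulVec_eq_zero_iff).2 hdet
    have hmem : v ∈ LinearMap.ker (Φᵀ * Φ).mulVecLin := hv0
    rw [Matrix.ker_mulVecLin_transpose_mul_self, hker] at hmem
    exact hv hmem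
  have hdet : IsUnit (Φᵀ * Φ).det := (Matrix.isUnit_iff_isUnit_det _).mp hUnit
  have hinvmul : (Φᵀ * Φ)⁻¹ * (Φᵀ * Φ) = 1 := Matrix.nonsing_inv_mul _ hdet
  have hmulinv : (Φᵀ * Φ) * (Φᵀ * Φ)⁻¹ = 1 := Matrix.mul_nonsing_inv _ hdet
  have hTTp : Φᵀ * Φ * Φp = Φᵀ := by
    rw [Matrix.mul_assoc, ← h3, ← Matrix.transpose_mul, h1]
  have hΦpEq : Φp = (Φᵀ * Φ)⁻¹ * Φᵀ := by
    calc Φp = (1 : Matrix (Fin m) (Fin m) ℝ) * Φp := (Matrix.one_mul _).symm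
    _ = (Φᵀ * Φ)⁻¹ * (Φᵀ * Φ) * Φp := by rw [hinvmul]
    _ = (Φᵀ * Φ)⁻¹ * (Φᵀ * Φ * Φp) := by rw [Matrix.mul_assoc]
    _ = (Φᵀ * Φ)⁻¹ * Φᵀ := by rw [hTTp]
  have hΨT : ((Φᵀ * Φ)⁻¹)ᵀ = (Φᵀ * Φ)⁻¹ := by
    rw [Matrix.transpose_nonsing_inv, Matrix.transpose_mul, Matrix.transpose_transpose]
  have hPΦ : Φp * Φ = 1 := by rw [hΦpEq, Matrix.mul_assoc]; exact hinvmul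
  have hPPT : Φp * Φpᵀ = (Φᵀ * Φ)⁻¹ := by
    rw [hΦpEq, Matrix.transpose_mul, hΨT, Matrix.transpose_transpose,
      Matrix.mul_assoc, ← Matrix.mul_assoc Φᵀ, hmulinv, Matrix.mul_one]
  have hPP : (Φ * Φp) * (Φ * Φp) = Φ * Φp := by
    rw [← Matrix.mul_assoc, h1]
  have hPform : Φ * Φp = Φ * (Φᵀ * Φ)⁻¹ * Φᵀ := by rw [hΦpEq, ← Matrix.mul_assoc]
  set B : Matrix (Fin n) (Fin n) ℝ := 1 - Φ * Φp with hB
  have hBT : Bᵀ = B := by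
    rw [hB, Matrix.transpose_sub, Matrix.transpose_one, h3]
  have hBB : B * Bᵀ = B := by
    rw [hBT, hB]
    simp [Matrix.sub_mul, Matrix.mul_sub, hPP]
  have hΦpB : Φp * Bᵀ = 0 := by
    rw [hBT, hB, Matrix.mul_sub, Matrix.mul_one, ← Matrix.mul_assoc, hPΦ, Matrix.one_mul, sub_self]
  -- rewrite f and ε
  have hf' : f = fun ω => g ω + Φp.mulVec (η ω) := by
    funext ω
    rw [hf, hx]
    simp only [Matrix.mulVec_add, Matrix.mulVec_mulVec, hPΦ, Matrix.one_mulVec]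
  have hε' : ε = fun ω => B.mulVec (η ω) := by
    funext ω
    rw [hε, hf, hx, hB]
    simp only [Matrix.mulVec_add, Matrix.mulVec_mulVec, Matrix.sub_mulVec, Matrix.one_mulVec,
      ← Matrix.mul_assoc, h1]
    abel
  -- component integrability
  have hAη : ∀ i, MemLp (fun ω => Φp.mulVec (η ω) i) 2 μ := memLp_mulVec μ Φp hη
  have hBη : ∀ i, MemLp (fun ω => B.mulVec (η ω) i) 2 μ := memLp_mulVec μ B hη
  have hfc : ∀ j : Fin m, MemLp (fun ω => (g ω + Φp.mulVec (η ω)) j) 2 μ :=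
    fun j => (hg j).add (hAη j)
  have hηg : vCov μ η g = 0 := by rw [vCov_transpose, huncorr, Matrix.transpose_zero]
  have hmf : vMean μ f = μg := by
    rw [hf', vMean_add μ hg hAη, vMean_mulVec_s19 μ Φp hη, hηmean, Matrix.mulVec_zero, hμg, add_zero]
  refine ⟨hmf, ?_, ?_, ?_, ?_⟩
  · -- Cov f f
    rw [hf', vCov_add_left μ hg hAη hfc,
      vCov_add_right μ hg hg hAη, vCov_add_right μ hAη hg hAη,
      vCov_mulVec_right μ Φp hg hη, huncorr,
      vCov_mulVec_left μ Φp hη hg, hηg,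
      vCov_mulVec_left μ Φp hη hAη, vCov_mulVec_right μ Φp hη hη, hηiso,
      Matrix.smul_mul, Matrix.one_mul, Matrix.mul_smul, hPPT, hSg]
    simp
  · -- Cov ε ε
    rw [hε', vCov_mulVec_left μ B hη hBη, vCov_mulVec_right μ B hη hη, hηiso,
      Matrix.smul_mul, Matrix.one_mul, Matrix.mul_smul, hBB, hB, hPform]
  · -- mean ε
    rw [hε', vMean_mulVec_s19 μ B hη, hηmean, Matrix.mulVec_zero]
  · -- Cov f ε
    rw [hf', hε', vCov_add_left μ hg hAη hBη,
      vCov_mulVec_right μ B hg hη, huncorr,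
      vCov_mulVec_left μ Φp hη hBη, vCov_mulVec_right μ B hη hη, hηiso,
      Matrix.smul_mul, Matrix.one_mul, Matrix.mul_smul, hΦpB]
    simp
end
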